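/- arXiv:2604.14948 — 3 statements merged into one kernel-verified Lean document; each statement's English description precedes it below -/
import Mathlib

section
/- Let α ∈ (1/2, ∞), let a ∈ ℝ^n with a ≠ 0, and let φ : [1,∞) → ℝ^n satisfy |φ(t)| ≤ k√t for all t ≥ 1. Then the function t ↦ 1/|a t + φ(t) + c|^α − 1/|a t|^α (for any fixed c ∈ ℝ^n) is integrable on [T, ∞) for T sufficiently large, with bound |1/|at+φ(t)+c|^α − 1/|at|^α| ≤ C t^{−(1/2+α)} for t large and some constant C depending on a, c, k, α. -/
/-!
Since `|φ(t) + c| = O(√t)` is eventually at most `|a| t / 2`, both `|at + φ(t) + c|` and `|at|` are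
at least `m = |a| t / 2`. On `[m, ∞)` the map `x ↦ x^(-α)` is `α m^(-α-1)`-Lipschitz, so the
difference is `O(t^(-α-1) · √t) = O(t^(-(1/2+α)))`, which is integrable at infinity as
`1/2 + α > 1`.
-/

open MeasureTheory Set

lemma abs_rpow_neg_sub_rpow_neg_le {α m x y : ℝ} (hα : 0 < α) (hm : 0 < m)
    (hx : m ≤ x) (hy : m ≤ y) :
    |x ^ (-α) - y ^ (-α)| ≤ α * m ^ (-α - 1) * |x - y| := by
  have hderiv : ∀ z ∈ Ici m, HasDerivWithinAt (fun z : ℝ => z ^ (-α))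
      (-α * z ^ (-α - 1)) (Ici m) z := fun z hz =>
    (Real.hasDerivAt_rpow_const (Or.inl (hm.trans_le hz).ne')).hasDerivWithinAt
  have hbound : ∀ z ∈ Ici m, ‖-α * z ^ (-α - 1)‖ ≤ α * m ^ (-α - 1) := fun z hz => by
    have hz0 : 0 < z := hm.trans_le hz
    rw [Real.norm_eq_abs, abs_mul, abs_neg, abs_of_pos hα, abs_of_nonneg (by positivity)]
    exact mul_le_mul_of_nonneg_left (Real.rpow_le_rpow_of_nonpos hm hz (by linarith)) hα.le
  simpa only [Real.norm_eq_abs] using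
    (convex_Ici m).norm_image_sub_le_of_norm_hasDerivWithin_le hderiv hbound hy hx

lemma abs_norm_rpow_neg_sub_norm_rpow_neg_le {E : Type*} [SeminormedAddCommGroup E]
    {α m : ℝ} (hα : 0 < α) (hm : 0 < m) {x y : E} (hx : m ≤ ‖x‖) (hy : m ≤ ‖y‖) :
    |‖x‖ ^ (-α) - ‖y‖ ^ (-α)| ≤ α * m ^ (-α - 1) * ‖x - y‖ :=
  (abs_rpow_neg_sub_rpow_neg_le hα hm hx hy).trans <| by
    gcongr
    exact abs_norm_sub_norm_le x y

lemma mul_sqrt_le_mul_of_div_sq_le {K b t : ℝ} (hb : 0 < b) (ht : (K / b) ^ 2 ≤ t) :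
    K * √t ≤ b * t := by
  have hK : K ≤ b * √t := by
    rw [← div_le_iff₀' hb]
    exact (le_abs_self _).trans (Real.abs_le_sqrt ht)
  calc K * √t ≤ b * √t * √t := by gcongr
    _ = b * t := by rw [mul_assoc, Real.mul_self_sqrt ((sq_nonneg _).trans ht)]

lemma abs_norm_smul_add_rpow_neg_sub_le {E : Type*} [NormedAddCommGroup E] [NormedSpace ℝ E]
    {α K t : ℝ} (hα : 0 < α) {a w : E} (ha : a ≠ 0) (ht : 0 < t)
    (hw : ‖w‖ ≤ K * √t) (hKt : K * √t ≤ ‖a‖ / 2 * t) :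
    |‖t • a + w‖ ^ (-α) - ‖t • a‖ ^ (-α)| ≤
      α * (‖a‖ / 2) ^ (-α - 1) * K * t ^ (-(1 / 2 + α)) := by
  have hA : 0 < ‖a‖ / 2 := by positivity
  have hta : ‖t • a‖ = ‖a‖ * t := by rw [norm_smul, Real.norm_of_nonneg ht.le, mul_comm]
  have hlow : ‖a‖ / 2 * t ≤ ‖t • a‖ := by rw [hta]; nlinarith
  have hlow' : ‖a‖ / 2 * t ≤ ‖t • a + w‖ := by
    have := norm_sub_norm_le (t • a) (-w)
    rw [sub_neg_eq_add, norm_neg] at this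
    linarith
  calc |‖t • a + w‖ ^ (-α) - ‖t • a‖ ^ (-α)|
      ≤ α * (‖a‖ / 2 * t) ^ (-α - 1) * ‖t • a + w - t • a‖ :=
        abs_norm_rpow_neg_sub_norm_rpow_neg_le hα (by positivity) hlow' hlow
    _ ≤ α * (‖a‖ / 2 * t) ^ (-α - 1) * (K * √t) := by
        rw [add_sub_cancel_left]
        gcongr
    _ = α * (‖a‖ / 2) ^ (-α - 1) * K * t ^ (-(1 / 2 + α)) := by
        rw [Real.mul_rpow hA.le ht.le, Real.sqrt_eq_rpow,
          show -(1 / 2 + α) = (-α - 1) + 1 / 2 by ring, Real.rpow_add ht]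
        ring

lemma integrableOn_Ici_of_abs_le_rpow {f : ℝ → ℝ} {T C s : ℝ} (hf : Measurable f)
    (hT : 0 < T) (hs : 1 < s) (hbound : ∀ t, T ≤ t → |f t| ≤ C * t ^ (-s)) :
    IntegrableOn f (Ici T) := by
  have hg : IntegrableOn (fun t : ℝ => C * t ^ (-s)) (Ici T) := by
    rw [integrableOn_Ici_iff_integrableOn_Ioi]
    exact (integrableOn_Ioi_rpow_of_lt (by linarith) hT).const_mul C
  refine hg.mono' hf.aestronglyMeasurable ?_
  filter_upwards [ae_restrict_mem measurableSet_Ici] with t ht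
  exact hbound t ht

/-- Key integrability estimate in the hyperbolic regime, `α > 1/2`:
the renormalized potential term `1/|at+φ(t)+c|^α − 1/|at|^α` is integrable at
infinity and bounded by `C t^{−(1/2+α)}` for large `t`, when `|φ(t)| ≤ k√t`. -/
theorem renormalized_potential_integrable (n : ℕ) (α k : ℝ) (hα : 1 / 2 < α)
    (a c : EuclideanSpace ℝ (Fin n)) (ha : a ≠ 0)
    (φ : ℝ → EuclideanSpace ℝ (Fin n)) (hφc : Continuous φ)
    (hφ : ∀ t : ℝ, 1 ≤ t → ‖φ t‖ ≤ k * Real.sqrt t) :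
    ∃ T : ℝ, 1 ≤ T ∧ ∃ C : ℝ,
      IntegrableOn
        (fun t => ‖t • a + φ t + c‖ ^ (-α) - ‖t • a‖ ^ (-α)) (Set.Ici T) ∧
      ∀ t : ℝ, T ≤ t →
        |‖t • a + φ t + c‖ ^ (-α) - ‖t • a‖ ^ (-α)| ≤ C * t ^ (-(1 / 2 + α)) := by
  set K := k + ‖c‖
  set T := max 1 ((K / (‖a‖ / 2)) ^ 2)
  have hT : 1 ≤ T := le_max_left _ _
  have hbound : ∀ t, T ≤ t → |‖t • a + φ t + c‖ ^ (-α) - ‖t • a‖ ^ (-α)| ≤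
      α * (‖a‖ / 2) ^ (-α - 1) * K * t ^ (-(1 / 2 + α)) := fun t ht => by
    have ht1 : 1 ≤ t := hT.trans ht
    have hw : ‖φ t + c‖ ≤ K * √t := calc
      ‖φ t + c‖ ≤ k * √t + ‖c‖ * √t := (norm_add_le _ _).trans <| add_le_add (hφ t ht1) <|
        le_mul_of_one_le_right (norm_nonneg c) (Real.one_le_sqrt.mpr ht1)
      _ = K * √t := by ring
    rw [add_assoc]
    exact abs_norm_smul_add_rpow_neg_sub_le (by linarith) ha (by linarith) hw
      (mul_sqrt_le_mul_of_div_sq_le (by positivity) ((le_max_right _ _).trans ht))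
  have hmeas : Measurable fun t : ℝ => ‖t • a + φ t + c‖ ^ (-α) - ‖t • a‖ ^ (-α) := by
    fun_prop
  exact ⟨T, hT, _, integrableOn_Ici_of_abs_le_rpow hmeas (by linarith) (by linarith) hbound,
    hbound⟩
end

section
/- Let μ < 1/4, T ≥ 1, and let θ₋ = (1 − √(1−4μ))/2. Suppose y : [T,∞) → ℝ is C², satisfies y''(t) + (μ/t²) y(t) ≥ 0 for all t > T, y has finite Dirichlet energy ∫_T^∞ |y'(t)|² dt < ∞, and let w(t) = y(T)(t/T)^{θ₋} − y(t). Then w(t) ≥ 0 for all t ≥ T, i.e., y(t) ≤ y(T)(t/T)^{θ₋}. -/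
open MeasureTheory Set Filter

/-!
Let `θ = θ₋`, a root of `θ (θ - 1) + μ = 0`. The Wronskian `W = t^θ y' - θ t^(θ-1) y` of `t^θ`
and `y` satisfies `W' = t^θ (y'' + μ y / t²) ≥ 0` and `(y / t^θ)' = W / t^(2θ)`. If `W ≤ 0`
everywhere, `y / t^θ` is nonincreasing, which is the claim. Otherwise `W ≥ W(s) > 0` beyond some
`s`, which forces `y(t) ≥ C t^θ + A t^(1-θ)` with `A > 0`; since `θ < 1/2 < 1 - θ`, this
contradicts the bound `y(t) ≤ y(T) + O(√t)` coming from the finite Dirichlet energy.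
-/

lemma monotoneOn_Ici_of_hasDerivAt_nonneg {f f' : ℝ → ℝ} {a : ℝ}
    (hf : ∀ t ∈ Ici a, HasDerivAt f (f' t) t) (hf' : ∀ t ∈ Ioi a, 0 ≤ f' t) :
    MonotoneOn f (Ici a) :=
  monotoneOn_of_hasDerivWithinAt_nonneg (convex_Ici a)
    (fun t ht => (hf t ht).continuousAt.continuousWithinAt)
    (fun t ht => (hf t (interior_subset ht)).hasDerivWithinAt) (by rwa [interior_Ici])

lemma antitoneOn_Ici_of_hasDerivAt_nonpos {f f' : ℝ → ℝ} {a : ℝ}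
    (hf : ∀ t ∈ Ici a, HasDerivAt f (f' t) t) (hf' : ∀ t ∈ Ioi a, f' t ≤ 0) :
    AntitoneOn f (Ici a) :=
  antitoneOn_of_hasDerivWithinAt_nonpos (convex_Ici a)
    (fun t ht => (hf t ht).continuousAt.continuousWithinAt)
    (fun t ht => (hf t (interior_subset ht)).hasDerivWithinAt) (by rwa [interior_Ici])

lemma le_add_mul_sqrt_of_integrableOn_sq_deriv {y y' : ℝ → ℝ} {T : ℝ} (hT : 0 ≤ T)
    (hd : ∀ t ∈ Ici T, HasDerivAt y (y' t) t) (hc : ContinuousOn y' (Ici T))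
    (hE : IntegrableOn (fun t => y' t ^ 2) (Ioi T)) {t : ℝ} (ht : T ≤ t) :
    y t ≤ y T + (1 + ∫ u in Ioi T, y' u ^ 2) / 2 * √t := by
  set E := ∫ u in Ioi T, y' u ^ 2
  have hE0 : 0 ≤ E := setIntegral_nonneg measurableSet_Ioi fun u _ => sq_nonneg (y' u)
  rcases ht.eq_or_lt with rfl | hlt
  · have := Real.sqrt_nonneg T
    nlinarith
  set p := √t
  have hp : 0 < p := Real.sqrt_pos.mpr (hT.trans_lt hlt)
  have hsub : uIcc T t ⊆ Ici T := by
    rw [uIcc_of_le ht]; exact Icc_subset_Ici_self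
  have hy'_int : IntervalIntegrable y' volume T t := (hc.mono hsub).intervalIntegrable
  have hsq_int : IntervalIntegrable (fun u => y' u ^ 2) volume T t :=
    ((hc.mono hsub).pow 2).intervalIntegrable
  have hsq_le : ∫ u in T..t, y' u ^ 2 ≤ E := by
    rw [intervalIntegral.integral_of_le ht]
    exact setIntegral_mono_set hE (Eventually.of_forall fun u => sq_nonneg _)
      Ioc_subset_Ioi_self.eventuallyLE
  -- AM-GM
  have hamgm : ∀ u, y' u ≤ (p⁻¹ + p * y' u ^ 2) / 2 := by
    intro u
    have : p * p⁻¹ = 1 := mul_inv_cancel₀ hp.ne'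
    nlinarith [sq_nonneg (p * y' u - 1)]
  have htp : t * p⁻¹ = p := by
    rw [← Real.mul_self_sqrt (hT.trans ht), mul_inv_cancel_right₀ hp.ne']
  calc y t = y T + ∫ u in T..t, y' u := by
        rw [intervalIntegral.integral_eq_sub_of_hasDerivAt (fun u hu => hd u (hsub hu)) hy'_int]
        ring
    _ ≤ y T + ∫ u in T..t, (p⁻¹ + p * y' u ^ 2) / 2 := by
        gcongr
        exact intervalIntegral.integral_mono_on ht hy'_int
          ((intervalIntegrable_const.add (hsq_int.const_mul p)).div_const 2) fun u _ => hamgm u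
    _ = y T + ((t - T) * p⁻¹ + p * ∫ u in T..t, y' u ^ 2) / 2 := by
        rw [intervalIntegral.integral_div, intervalIntegral.integral_add intervalIntegrable_const
          (hsq_int.const_mul p), intervalIntegral.integral_const,
          intervalIntegral.integral_const_mul, smul_eq_mul]
    _ ≤ y T + (1 + E) / 2 * p := by
        have : (t - T) * p⁻¹ ≤ p := calc
          (t - T) * p⁻¹ ≤ t * p⁻¹ := by gcongr; linarith
          _ = p := htp
        nlinarith [mul_le_mul_of_nonneg_left hsq_le hp.le]

lemma nonpos_of_eventually_rpow_le {a b c A B C D : ℝ} (ha : a < c) (hb : b < c) (hc : 0 < c)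
    (h : ∀ᶠ t in atTop, C * t ^ a + A * t ^ c ≤ B + D * t ^ b) : A ≤ 0 := by
  have hlim : ∀ {e : ℝ}, e < 0 → Tendsto (fun t : ℝ => t ^ e) atTop (nhds 0) := fun he => by
    simpa using tendsto_rpow_neg_atTop (neg_pos.mpr he)
  have hlower : Tendsto (fun t : ℝ => C * t ^ (a - c) + A) atTop (nhds A) := by
    simpa using ((hlim (sub_neg.mpr ha)).const_mul C).add_const A
  have hupper : Tendsto (fun t : ℝ => B * t ^ (-c) + D * t ^ (b - c)) atTop (nhds 0) := by
    simpa using ((hlim (neg_neg_iff_pos.mpr hc)).const_mul B).add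
      ((hlim (sub_neg.mpr hb)).const_mul D)
  refine le_of_tendsto_of_tendsto hlower hupper ?_
  filter_upwards [h, eventually_gt_atTop 0] with t ht htpos
  have hpos : 0 < t ^ c := Real.rpow_pos_of_pos htpos c
  rw [Real.rpow_sub htpos, Real.rpow_sub htpos, Real.rpow_neg htpos.le]
  calc C * (t ^ a / t ^ c) + A = (C * t ^ a + A * t ^ c) / t ^ c := by field_simp
    _ ≤ (B + D * t ^ b) / t ^ c := by gcongr
    _ = B * (t ^ c)⁻¹ + D * (t ^ b / t ^ c) := by field_simp

noncomputable def powWronskian (θ : ℝ) (y y' : ℝ → ℝ) (t : ℝ) : ℝ :=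
  t ^ θ * y' t - θ * t ^ (θ - 1) * y t

section
variable {θ μ t : ℝ} {y y' y'' : ℝ → ℝ}

lemma hasDerivAt_div_rpow (ht : 0 < t) (hy : HasDerivAt y (y' t) t) :
    HasDerivAt (fun u => y u / u ^ θ) (powWronskian θ y y' t / (t ^ θ) ^ 2) t := by
  refine (hy.div (Real.hasDerivAt_rpow_const (Or.inl ht.ne'))
    (Real.rpow_pos_of_pos ht θ).ne').congr_deriv ?_
  simp only [powWronskian]
  ring

lemma hasDerivAt_powWronskian (hθμ : θ * (θ - 1) = -μ) (ht : 0 < t)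
    (hy : HasDerivAt y (y' t) t) (hy' : HasDerivAt y' (y'' t) t) :
    HasDerivAt (powWronskian θ y y') (t ^ θ * (y'' t + μ / t ^ 2 * y t)) t := by
  have hpow : ∀ p : ℝ, HasDerivAt (fun u : ℝ => u ^ p) (p * t ^ (p - 1)) t := fun p =>
    Real.hasDerivAt_rpow_const (Or.inl ht.ne')
  refine (((hpow θ).mul hy').sub (((hpow (θ - 1)).const_mul θ).mul hy)).congr_deriv ?_
  have ht2 : t ^ (θ - 1 - 1) = t ^ θ / t ^ 2 := by
    rw [Real.rpow_sub ht, Real.rpow_sub ht, Real.rpow_one, div_div, sq]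
  rw [ht2]
  linear_combination -(t ^ θ * y t / t ^ 2) * hθμ

variable {T : ℝ}

lemma monotoneOn_powWronskian (hθμ : θ * (θ - 1) = -μ) (hT : 0 < T)
    (hy : ∀ t ∈ Ici T, HasDerivAt y (y' t) t) (hy' : ∀ t ∈ Ici T, HasDerivAt y' (y'' t) t)
    (hineq : ∀ t ∈ Ioi T, 0 ≤ y'' t + μ / t ^ 2 * y t) :
    MonotoneOn (powWronskian θ y y') (Ici T) :=
  monotoneOn_Ici_of_hasDerivAt_nonneg
    (fun t ht => hasDerivAt_powWronskian hθμ (hT.trans_le ht) (hy t ht) (hy' t ht))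
    fun t ht => mul_nonneg (Real.rpow_nonneg (hT.trans ht).le θ) (hineq t ht)

lemma exists_rpow_le_of_monotoneOn_powWronskian (hθ : θ < 1 / 2) (hT : 0 < T)
    (hy : ∀ t ∈ Ici T, HasDerivAt y (y' t) t) (hW : MonotoneOn (powWronskian θ y y') (Ici T)) :
    ∃ C, ∀ t ∈ Ici T,
      C * t ^ θ + powWronskian θ y y' T / (1 - 2 * θ) * t ^ (1 - θ) ≤ y t := by
  set A := powWronskian θ y y' T / (1 - 2 * θ)
  have hk : MonotoneOn (fun t => y t / t ^ θ - A * t ^ (1 - 2 * θ)) (Ici T) := by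
    refine monotoneOn_Ici_of_hasDerivAt_nonneg (fun t ht => (hasDerivAt_div_rpow
      (hT.trans_le ht) (hy t ht)).sub ((Real.hasDerivAt_rpow_const
      (Or.inl (hT.trans_le ht).ne')).const_mul A)) fun t ht => ?_
    have ht0 : 0 < t := hT.trans ht
    have hsq : (t ^ θ) ^ 2 = (t ^ (1 - 2 * θ - 1))⁻¹ := by
      rw [← Real.rpow_natCast, ← Real.rpow_mul ht0.le, ← Real.rpow_neg ht0.le]
      ring_nf
    have hA : A * (1 - 2 * θ) = powWronskian θ y y' T := div_mul_cancel₀ _ (by linarith)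
    have hfactor : ∀ X, powWronskian θ y y' t * X - A * ((1 - 2 * θ) * X)
        = (powWronskian θ y y' t - powWronskian θ y y' T) * X := fun X => by rw [← hA]; ring
    rw [hsq, div_inv_eq_mul, hfactor]
    exact mul_nonneg (sub_nonneg.mpr (hW self_mem_Ici (mem_Ici.mpr ht.le) ht.le))
      (Real.rpow_nonneg ht0.le _)
  refine ⟨y T / T ^ θ - A * T ^ (1 - 2 * θ), fun t ht => ?_⟩
  have ht0 : 0 < t := hT.trans_le ht
  have htθ : 0 < t ^ θ := Real.rpow_pos_of_pos ht0 θ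
  have hexp : t ^ θ * t ^ (1 - 2 * θ) = t ^ (1 - θ) := by
    rw [← Real.rpow_add ht0]; ring_nf
  calc (y T / T ^ θ - A * T ^ (1 - 2 * θ)) * t ^ θ + A * t ^ (1 - θ)
      ≤ (y t / t ^ θ - A * t ^ (1 - 2 * θ)) * t ^ θ + A * t ^ (1 - θ) := by
        gcongr ?_ * _ + _
        exact hk self_mem_Ici ht ht
    _ = y t := by rw [← hexp]; field_simp; ring

lemma powWronskian_nonpos_of_integrableOn_sq_deriv (hθμ : θ * (θ - 1) = -μ) (hθ : θ < 1 / 2)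
    (hT : 0 < T) (hy : ∀ t ∈ Ici T, HasDerivAt y (y' t) t)
    (hy' : ∀ t ∈ Ici T, HasDerivAt y' (y'' t) t)
    (hineq : ∀ t ∈ Ioi T, 0 ≤ y'' t + μ / t ^ 2 * y t)
    (hE : IntegrableOn (fun t => y' t ^ 2) (Ioi T)) {s : ℝ} (hs : T ≤ s) :
    powWronskian θ y y' s ≤ 0 := by
  by_contra! hWs
  have hsub : Ici s ⊆ Ici T := Ici_subset_Ici.mpr hs
  obtain ⟨C, hC⟩ := exists_rpow_le_of_monotoneOn_powWronskian hθ (hT.trans_le hs)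
    (fun t ht => hy t (hsub ht)) ((monotoneOn_powWronskian hθμ hT hy hy' hineq).mono hsub)
  have hy'c : ContinuousOn y' (Ici T) := fun t ht => (hy' t ht).continuousAt.continuousWithinAt
  have hgrowth : ∀ᶠ t in atTop, C * t ^ θ + powWronskian θ y y' s / (1 - 2 * θ) * t ^ (1 - θ)
      ≤ y T + (1 + ∫ u in Ioi T, y' u ^ 2) / 2 * t ^ (1 / 2 : ℝ) := by
    filter_upwards [eventually_ge_atTop s] with t hst
    rw [← Real.sqrt_eq_rpow]
    exact (hC t hst).trans
      (le_add_mul_sqrt_of_integrableOn_sq_deriv hT.le hy hy'c hE (hs.trans hst))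
  exact (nonpos_of_eventually_rpow_le (by linarith) (by linarith) (by linarith) hgrowth).not_gt
    (div_pos hWs (by linarith))

end

/-- Maximum principle for the singular Euler operator (homogeneous case): if
`y'' + (μ/t²) y ≥ 0` on `(T,∞)`, `μ < 1/4`, and `y` has finite Dirichlet
energy, then `y(t) ≤ y(T)(t/T)^{θ₋}` for `t ≥ T`. -/
theorem euler_maximum_principle (μ T : ℝ) (hμ : μ < 1 / 4) (hT : 1 ≤ T)
    (θm : ℝ) (hθm : θm = (1 - Real.sqrt (1 - 4 * μ)) / 2)
    (y y' y'' : ℝ → ℝ)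
    (hd1 : ∀ t ∈ Set.Ici T, HasDerivAt y (y' t) t)
    (hd2 : ∀ t ∈ Set.Ici T, HasDerivAt y' (y'' t) t)
    (hineq : ∀ t : ℝ, T < t → 0 ≤ y'' t + (μ / t ^ 2) * y t)
    (henergy : IntegrableOn (fun t => (y' t) ^ 2) (Set.Ioi T)) :
    ∀ t : ℝ, T ≤ t → y t ≤ y T * (t / T) ^ θm := by
  have hT0 : 0 < T := by linarith
  have hsqrt : 0 < √(1 - 4 * μ) := Real.sqrt_pos.mpr (by linarith)
  have hθμ : θm * (θm - 1) = -μ := by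
    rw [hθm]; nlinarith [Real.sq_sqrt (show 0 ≤ 1 - 4 * μ by linarith)]
  have hθ : θm < 1 / 2 := by rw [hθm]; linarith
  have hquot : AntitoneOn (fun t => y t / t ^ θm) (Ici T) :=
    antitoneOn_Ici_of_hasDerivAt_nonpos
      (fun t ht => hasDerivAt_div_rpow (hT0.trans_le ht) (hd1 t ht))
      fun t ht => div_nonpos_of_nonpos_of_nonneg (powWronskian_nonpos_of_integrableOn_sq_deriv
        hθμ hθ hT0 hd1 hd2 hineq henergy (le_of_lt ht)) (sq_nonneg _)
  intro t ht
  have hle : y t / t ^ θm ≤ y T / T ^ θm := hquot self_mem_Ici ht ht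
  rw [div_le_iff₀ (Real.rpow_pos_of_pos (hT0.trans_le ht) θm)] at hle
  rwa [Real.div_rpow (hT0.trans_le ht).le hT0.le, ← mul_div_assoc, mul_div_right_comm]
end

section
/- Let α > 0 and k ∈ ℕ, k ≥ 1, and for a ∈ Ω define Γ_k(a) recursively by Γ₁(a) = −M^{−1}∇U(a)/(α(1−α)) and Γ_k(a) = −( Σ_{q=1}^{k−1} (1/q!) Σ_{j₁+⋯+j_q = k−1} M^{−1}∇^{q+1}U(a)[Γ_{j₁}(a),…,Γ_{j_q}(a)] ) / (kα(1−kα)), where U is homogeneous of degree −α. Then for all λ > 0, Γ_k(λa) = λ^{1−k(2+α)} Γ_k(a). -/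
open Finset

/-- The vector `∇^{q+1}U(x)[v₁,…,v_q]`: the gradient (with respect to `x`) of
the `q`-linear form `x ↦ D^q U(x)[v₁,…,v_q]`. -/
noncomputable def nablaPow {n : ℕ} (U : EuclideanSpace ℝ (Fin n) → ℝ) (q : ℕ)
    (x : EuclideanSpace ℝ (Fin n)) (v : Fin q → EuclideanSpace ℝ (Fin n)) :
    EuclideanSpace ℝ (Fin n) :=
  gradient (fun y => iteratedFDeriv ℝ q U y v) x

section Aux

variable {n : ℕ}
local notation "E" => EuclideanSpace ℝ (Fin n)

private lemma prod_rpow_fin {l : ℝ} (hl : 0 < l) {q : ℕ} (f : Fin q → ℝ) :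
    ∏ i, l ^ f i = l ^ (∑ i, f i) := by
  simp only [Real.rpow_def_of_pos hl]
  rw [← Real.exp_sum, ← Finset.mul_sum]

private lemma iter_congr {f g : E → ℝ} {x : E} (h : f =ᶠ[nhds x] g) (q : ℕ) :
    iteratedFDeriv ℝ q f x = iteratedFDeriv ℝ q g x := by
  rw [← iteratedFDerivWithin_univ, ← iteratedFDerivWithin_univ]
  exact (h.filter_mono nhdsWithin_le_nhds).iteratedFDerivWithin_eq h.eq_of_nhds q

private lemma grad_const_mul {G : E → ℝ} {x : E} (hd : DifferentiableAt ℝ G x) (c : ℝ) :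
    gradient (fun y => c * G y) x = c • gradient G x := by
  unfold gradient
  rw [fderiv_const_mul hd c, map_smul]

private lemma iter_scale {α : ℝ} {Ω : Set (EuclideanSpace ℝ (Fin n))} (hΩ : IsOpen Ω)
    {U : EuclideanSpace ℝ (Fin n) → ℝ}
    (hU : ∀ x ∈ Ω, ContDiffAt ℝ (⊤ : ℕ∞) U x)
    {l : ℝ} (hl : 0 < l)
    (hhoml : ∀ x ∈ Ω, U (l • x) = l ^ (-α) * U x)
    (q : ℕ) {x : EuclideanSpace ℝ (Fin n)} (hx : x ∈ Ω) (hlx : l • x ∈ Ω)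
    (v : Fin q → EuclideanSpace ℝ (Fin n)) :
    iteratedFDeriv ℝ q U (l • x) v = l ^ (-α - q) * iteratedFDeriv ℝ q U x v := by
  set g : E →L[ℝ] E := l • ContinuousLinearMap.id ℝ E with hg
  have hgy : ∀ y : E, g y = l • y := fun y => rfl
  have hUon : ContDiffOn ℝ (⊤ : ℕ∞) U Ω := fun y hy => (hU y hy).contDiffWithinAt
  have hpre : IsOpen (g ⁻¹' Ω) := hΩ.preimage g.continuous
  have hxpre : x ∈ g ⁻¹' Ω := by simpa [hgy] using hlx
  have hA : iteratedFDeriv ℝ q (U ∘ g) x v = iteratedFDeriv ℝ q U (l • x) (fun i => l • v i) := by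
    have h := g.iteratedFDerivWithin_comp_right hUon hΩ.uniqueDiffOn hpre.uniqueDiffOn
      (show g x ∈ Ω from hlx) (i := q) (by exact_mod_cast le_top)
    have hgx : g x = l • x := rfl
    rw [iteratedFDerivWithin_of_isOpen q hpre hxpre, hgx,
      iteratedFDerivWithin_of_isOpen q hΩ hlx] at h
    rw [h]
    rfl
  have hev : (U ∘ g) =ᶠ[nhds x] (fun y => l ^ (-α) * U y) := by
    filter_upwards [hΩ.mem_nhds hx] with y hy
    simpa [hgy] using hhoml y hy
  have hB : iteratedFDeriv ℝ q (U ∘ g) x = l ^ (-α) • iteratedFDeriv ℝ q U x := by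
    rw [iter_congr hev q]
    have := iteratedFDerivWithin_const_smul_apply (𝕜 := ℝ) (i := q) (a := l ^ (-α)) (f := U)
      (s := Ω) ((hUon.of_le (by exact_mod_cast le_top)) x hx) hΩ.uniqueDiffOn hx
    rw [iteratedFDerivWithin_of_isOpen (f := U) q hΩ hx,
      iteratedFDerivWithin_of_isOpen (f := l ^ (-α) • U) q hΩ hx] at this
    rw [← this]
    congr 1
  have hC : iteratedFDeriv ℝ q U (l • x) (fun i => l • v i)
      = (l ^ q : ℝ) • iteratedFDeriv ℝ q U (l • x) v := by
    have := (iteratedFDeriv ℝ q U (l • x)).map_smul_univ (fun _ => l) v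
    simpa [Finset.prod_const] using this
  have key : (l ^ q : ℝ) * iteratedFDeriv ℝ q U (l • x) v
      = l ^ (-α) * iteratedFDeriv ℝ q U x v := by
    have h1 : iteratedFDeriv ℝ q (U ∘ g) x v = l ^ (-α) * iteratedFDeriv ℝ q U x v := by
      rw [hB]; simp [smul_eq_mul]
    rw [hA, hC] at h1
    simpa [smul_eq_mul] using h1
  have hlq : (l ^ q : ℝ) ≠ 0 := pow_ne_zero _ hl.ne'
  have hrw : l ^ (-α - (q : ℝ)) = l ^ (-α) / l ^ (q : ℕ) := by
    rw [Real.rpow_sub hl, Real.rpow_natCast]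
  rw [hrw]
  field_simp
  linarith [key]

private lemma diffG {U : E → ℝ} {x : E} (hU : ContDiffAt ℝ (⊤ : ℕ∞) U x) (q : ℕ) (v : Fin q → E) :
    DifferentiableAt ℝ (fun y => iteratedFDeriv ℝ q U y v) x := by
  have h1 : ContDiffAt ℝ 1 (iteratedFDeriv ℝ q U) x :=
    hU.iteratedFDeriv_right (by exact_mod_cast le_top)
  exact ((ContinuousMultilinearMap.apply ℝ (fun _ : Fin q => E) ℝ v).differentiableAt).comp x
    (h1.differentiableAt one_ne_zero)

private lemma grad_key {G : E → ℝ} {x : E} {l c : ℝ} (hl : 0 < l)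
    (hG : ∀ᶠ y in nhds x, G (l • y) = c * G y)
    (hd1 : DifferentiableAt ℝ G (l • x)) (hd0 : DifferentiableAt ℝ G x) :
    gradient G (l • x) = (l⁻¹ * c) • gradient G x := by
  have hsd : DifferentiableAt ℝ (fun y : E => l • y) x := differentiableAt_id.const_smul l
  have h1 : fderiv ℝ (fun y => G (l • y)) x = l • fderiv ℝ G (l • x) := by
    have : (fun y => G (l • y)) = G ∘ (fun y : E => l • y) := rfl
    rw [this, fderiv_comp x hd1 hsd]
    have h2 : fderiv ℝ (fun y : E => l • y) x = l • ContinuousLinearMap.id ℝ E := by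
      rw [show (fun y : E => l • y) = (fun y : E => l • (id y)) from rfl,
        fderiv_fun_const_smul differentiableAt_id l, fderiv_id]
    rw [h2]
    ext w
    simp
  have h2 : fderiv ℝ (fun y => G (l • y)) x = c • fderiv ℝ G x := by
    rw [Filter.EventuallyEq.fderiv_eq hG, fderiv_const_mul hd0 c]
  have h3 : l • fderiv ℝ G (l • x) = c • fderiv ℝ G x := by rw [← h1, h2]
  have h4 : l • gradient G (l • x) = c • gradient G x := by
    unfold gradient
    rw [← map_smul, ← map_smul, h3]
  have := congrArg (fun z => l⁻¹ • z) h4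
  simpa [smul_smul, inv_mul_cancel₀ hl.ne'] using this

private lemma nabla_scale {α : ℝ} {Ω : Set (EuclideanSpace ℝ (Fin n))} (hΩ : IsOpen Ω)
    {U : EuclideanSpace ℝ (Fin n) → ℝ}
    (hU : ∀ x ∈ Ω, ContDiffAt ℝ (⊤ : ℕ∞) U x)
    {l : ℝ} (hl : 0 < l) (hcl : ∀ x ∈ Ω, l • x ∈ Ω)
    (hhoml : ∀ x ∈ Ω, U (l • x) = l ^ (-α) * U x)
    (q : ℕ) {x : EuclideanSpace ℝ (Fin n)} (hx : x ∈ Ω)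
    (v : Fin q → EuclideanSpace ℝ (Fin n)) :
    nablaPow U q (l • x) v = l ^ (-α - q - 1) • nablaPow U q x v := by
  have hlx : l • x ∈ Ω := hcl x hx
  have hG : ∀ᶠ y in nhds x, (fun y => iteratedFDeriv ℝ q U y v) (l • y)
      = l ^ (-α - q) * (fun y => iteratedFDeriv ℝ q U y v) y := by
    filter_upwards [hΩ.mem_nhds hx] with y hy
    exact iter_scale hΩ hU hl hhoml q hy (hcl y hy) v
  have h := grad_key hl hG (diffG (hU _ hlx) q v) (diffG (hU _ hx) q v)
  unfold nablaPow
  rw [h]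
  congr 1
  rw [show -α - (q : ℝ) - 1 = (-1) + (-α - q) by ring, Real.rpow_add hl, Real.rpow_neg_one]

private lemma nablaPow_smul {U : E → ℝ} {x : E} (hU : ContDiffAt ℝ (⊤ : ℕ∞) U x) (q : ℕ)
    (s : Fin q → ℝ) (u : Fin q → E) :
    nablaPow U q x (fun i => s i • u i) = (∏ i, s i) • nablaPow U q x u := by
  unfold nablaPow
  have hpt : (fun y => iteratedFDeriv ℝ q U y (fun i => s i • u i))
      = fun y => (∏ i, s i) * iteratedFDeriv ℝ q U y u := by
    funext y
    rw [← smul_eq_mul, ← ContinuousMultilinearMap.map_smul_univ]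
  rw [hpt, grad_const_mul (diffG hU q u) _]

end Aux

/-- Scaling law of the hyperbolic correction vectors: if `U` is smooth on an
open positively-scaling-invariant set `Ω` and homogeneous of degree `−α`, and
`Γ x k` satisfies the recursion
`Γ x 1 = −M⁻¹∇U(x)/(α(1−α))`,
`Γ x k = −(Σ_{q=1}^{k−1} (1/q!) Σ_{j₁+⋯+j_q=k−1, jᵢ≥1}
  M⁻¹∇^{q+1}U(x)[Γ x j₁, …, Γ x j_q]) / (kα(1−kα))`,
then `Γ (λ•a) k = λ^{1−k(2+α)} • Γ a k` for all `λ > 0`. -/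
theorem gamma_scaling (n : ℕ) (α : ℝ) (hα : 0 < α)
    (Ω : Set (EuclideanSpace ℝ (Fin n))) (hΩ : IsOpen Ω)
    (hcone : ∀ l : ℝ, 0 < l → ∀ x ∈ Ω, l • x ∈ Ω)
    (U : EuclideanSpace ℝ (Fin n) → ℝ)
    (hU : ∀ x ∈ Ω, ContDiffAt ℝ (⊤ : ℕ∞) U x)
    (hhom : ∀ l : ℝ, 0 < l → ∀ x ∈ Ω, U (l • x) = l ^ (-α) * U x)
    (Minv : EuclideanSpace ℝ (Fin n) →L[ℝ] EuclideanSpace ℝ (Fin n))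
    (hαk : ∀ k : ℕ, 1 ≤ k → (k : ℝ) * α ≠ 1)
    (Γ : EuclideanSpace ℝ (Fin n) → ℕ → EuclideanSpace ℝ (Fin n))
    (hΓ1 : ∀ x ∈ Ω, Γ x 1 = (-(α * (1 - α))⁻¹) • Minv (gradient U x))
    (hΓrec : ∀ x ∈ Ω, ∀ k : ℕ, 2 ≤ k →
      Γ x k = (-((k : ℝ) * α * (1 - (k : ℝ) * α))⁻¹) •
        ∑ q ∈ Finset.Icc 1 (k - 1),
          ((q.factorial : ℝ))⁻¹ •
            ∑ j : Fin q → Fin k,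
              if (∑ i, ((j i : ℕ))) = k - 1 ∧ (∀ i, 1 ≤ ((j i : ℕ))) then
                Minv (nablaPow U q x (fun i => Γ x ((j i : ℕ))))
              else 0)
    (a : EuclideanSpace ℝ (Fin n)) (ha : a ∈ Ω)
    (k : ℕ) (hk : 1 ≤ k) (l : ℝ) (hl : 0 < l) :
    Γ (l • a) k = (l ^ (1 - (k : ℝ) * (2 + α))) • Γ a k := by
  have hhoml : ∀ x ∈ Ω, U (l • x) = l ^ (-α) * U x := fun x hx => hhom l hl x hx
  have hla : l • a ∈ Ω := hcone l hl a ha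
  induction k using Nat.strong_induction_on with
  | _ k IH =>
  rcases eq_or_lt_of_le hk with h1 | h2
  · -- k = 1
    subst h1
    rw [hΓ1 _ hla, hΓ1 a ha]
    have hG : ∀ᶠ y in nhds a, U (l • y) = l ^ (-α) * U y := by
      filter_upwards [hΩ.mem_nhds ha] with y hy
      exact hhoml y hy
    have hgrad := grad_key hl hG ((hU _ hla).differentiableAt (by simp))
      ((hU _ ha).differentiableAt (by simp))
    rw [hgrad, map_smul, smul_comm]
    congr 1
    rw [show (1 : ℝ) - ((1 : ℕ) : ℝ) * (2 + α) = (-1) + (-α) by push_cast; ring,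
      Real.rpow_add hl, Real.rpow_neg_one]
  · -- 2 ≤ k
    have hk2 : 2 ≤ k := h2
    rw [hΓrec _ hla k hk2, hΓrec a ha k hk2]
    have main : (∑ q ∈ Finset.Icc 1 (k - 1),
          ((q.factorial : ℝ))⁻¹ •
            ∑ j : Fin q → Fin k,
              if (∑ i, ((j i : ℕ))) = k - 1 ∧ (∀ i, 1 ≤ ((j i : ℕ))) then
                Minv (nablaPow U q (l • a) (fun i => Γ (l • a) ((j i : ℕ))))
              else 0)
        = (l ^ (1 - (k : ℝ) * (2 + α))) • ∑ q ∈ Finset.Icc 1 (k - 1),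
          ((q.factorial : ℝ))⁻¹ •
            ∑ j : Fin q → Fin k,
              if (∑ i, ((j i : ℕ))) = k - 1 ∧ (∀ i, 1 ≤ ((j i : ℕ))) then
                Minv (nablaPow U q a (fun i => Γ a ((j i : ℕ))))
              else 0 := by
      rw [Finset.smul_sum]
      refine Finset.sum_congr rfl fun q hq => ?_
      rw [smul_comm]
      congr 1
      rw [Finset.smul_sum]
      refine Finset.sum_congr rfl fun j _ => ?_
      by_cases hcnd : (∑ i, ((j i : ℕ))) = k - 1 ∧ (∀ i, 1 ≤ ((j i : ℕ)))
      · rw [if_pos hcnd, if_pos hcnd]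
        have hΓsc : (fun i => Γ (l • a) ((j i : ℕ)))
            = fun i => (l ^ ((1 : ℝ) - ((j i : ℕ) : ℝ) * (2 + α))) • Γ a ((j i : ℕ)) :=
          funext fun i => IH _ (j i).isLt (hcnd.2 i)
        rw [hΓsc, nablaPow_smul (hU _ hla) q _ _,
          nabla_scale hΩ hU hl (fun x hx => hcone l hl x hx) hhoml q ha _,
          prod_rpow_fin hl, map_smul, map_smul, smul_smul, ← Real.rpow_add hl]
        congr 2
        have hsum : (∑ i, ((j i : ℕ) : ℝ)) = (k : ℝ) - 1 := by
          have h' : ((∑ i, ((j i : ℕ)) : ℕ) : ℝ) = (((k : ℕ) - 1 : ℕ) : ℝ) := by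
            exact_mod_cast congrArg (fun m : ℕ => (m : ℝ)) hcnd.1
          rw [Nat.cast_sum, Nat.cast_sub hk] at h'
          simpa using h'
        have hexp : ∑ i, ((1 : ℝ) - ((j i : ℕ) : ℝ) * (2 + α))
            = (q : ℝ) - ((k : ℝ) - 1) * (2 + α) := by
          rw [Finset.sum_sub_distrib, Finset.sum_const, card_univ, Fintype.card_fin,
            nsmul_eq_mul, mul_one, ← Finset.sum_mul, hsum]
        rw [hexp]
        ring
      · rw [if_neg hcnd, if_neg hcnd, smul_zero]
    rw [main, smul_comm]
end
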